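/- Let E = {Q ∈ ℝ^{N×n} : λ_i(Q) = 1 for all i = 1,...,min(N,n)} be the set of matrices all of whose singular values equal 1. Then the convex hull of E equals {Q ∈ ℝ^{N×n} : λ_max(Q) ≤ 1}, i.e. the closed unit ball of the operator norm. -/

import Mathlib

open Matrix

/-- The largest singular value of `Q` (its operator norm as a map between Euclidean spaces). -/
noncomputable def lambdaMax {N n : ℕ} (Q : Matrix (Fin N) (Fin n) ℝ) : ℝ :=
  ‖LinearMap.toContinuousLinearMap (Matrix.toEuclideanLin Q)‖

/-- The set of `N × n` matrices all of whose singular values equal `1`: equivalently,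
the Gram matrix corresponding to the smaller dimension is the identity. -/
def allSingularValuesOne (N n : ℕ) : Set (Matrix (Fin N) (Fin n) ℝ) :=
  {Q | Q * Qᵀ = 1 ∨ Qᵀ * Q = 1}


/-!
By Krein–Milman the operator-norm unit ball is the closed convex hull of its extreme points,
and every extreme point is an isometry or a coisometry. Indeed, if `‖Q‖ ≤ 1` while
`R = 1 - Q Qᴴ ≠ 0` and `S = 1 - Qᴴ Q ≠ 0`, pick `W` small with `R W S ≠ 0`. Since
`Qᴴ R = S Qᴴ`, we get `(Q + R W S)ᴴ (Q + R W S) = Qᴴ Q + S H S` with `H` small, and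
`1 - Qᴴ Q - S H S = S (Qᴴ Q) S + (Qᴴ Q) S (Qᴴ Q) + S (1 - H) S ≥ 0`; so both `Q ± R W S`
lie in the ball. The closure can be dropped because, by Carathéodory, the convex hull of a
compact set in finite dimension is compact.
-/

open Set Metric
-- With the `L2Operator` norm, `‖Q‖` is `lambdaMax Q` by definition.
open scoped Matrix.Norms.L2Operator MatrixOrder ComplexOrder

section Caratheodory

variable {E : Type*} [AddCommGroup E] [Module ℝ E] [FiniteDimensional ℝ E]

theorem convexHull_eq_biUnion_image_stdSimplex (s : Set E) :
    convexHull ℝ s = ⋃ k ∈ Iic (Module.finrank ℝ E + 1),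
      (fun p : (Fin k → ℝ) × (Fin k → E) => ∑ i, p.1 i • p.2 i) ''
        (stdSimplex ℝ (Fin k) ×ˢ univ.pi fun _ => s) := by
  refine subset_antisymm (fun x hx => ?_) (iUnion₂_subset fun k _ => ?_)
  · obtain ⟨ι, _, z, w, hzs, hz, hw0, hw1, rfl⟩ := eq_pos_convex_span_of_mem_convexHull hx
    let e := (Fintype.equivFin ι).symm
    refine mem_iUnion₂.mpr ⟨Fintype.card ι, ?_, (w ∘ e, z ∘ e),
      ⟨⟨fun i => (hw0 _).le, by simpa [e.sum_comp] using hw1⟩,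
        fun i _ => hzs (mem_range_self _)⟩, e.sum_comp fun i => w i • z i⟩
    exact hz.card_le_finrank_succ.trans (Nat.add_le_add_right (Submodule.finrank_le _) 1)
  · rintro _ ⟨p, ⟨⟨hp0, hp1⟩, hps⟩, rfl⟩
    exact (convex_convexHull ℝ s).sum_mem (fun i _ => hp0 i) hp1
      fun i _ => subset_convexHull ℝ s (hps i (mem_univ i))

theorem IsCompact.convexHull [TopologicalSpace E] [ContinuousAdd E] [ContinuousSMul ℝ E]
    {s : Set E} (hs : IsCompact s) : IsCompact (convexHull ℝ s) := by
  rw [convexHull_eq_biUnion_image_stdSimplex]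
  exact (finite_Iic _).isCompact_biUnion fun k _ =>
    ((isCompact_stdSimplex _ _).prod (isCompact_univ_pi fun _ => hs)).image (by fun_prop)

end Caratheodory

namespace Matrix

theorem exists_mul_mul_ne_zero {α l m n o : Type*} [Semiring α] [NoZeroDivisors α]
    [Fintype m] [Fintype n] [DecidableEq m] [DecidableEq n]
    {R : Matrix l m α} {S : Matrix n o α} (hR : R ≠ 0) (hS : S ≠ 0) :
    ∃ W : Matrix m n α, R * W * S ≠ 0 := by
  obtain ⟨i, k, hik⟩ : ∃ i k, R i k ≠ 0 := by
    by_contra! h; exact hR (ext h)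
  obtain ⟨k', j, hkj⟩ : ∃ k' j, S k' j ≠ 0 := by
    by_contra! h; exact hS (ext h)
  have hentry : (R * single k k' (1 : α) * S) i j = R i k * S k' j := by
    rw [mul_apply, Finset.sum_eq_single k' (fun x _ hx => by simp [hx]) (by simp),
      mul_single_apply_same, mul_one]
  exact ⟨single k k' 1, fun h => mul_ne_zero hik hkj (hentry ▸ congrFun (congrFun h i) j)⟩

variable {𝕜 m n : Type*} [RCLike 𝕜] [Fintype m] [Fintype n]

theorem conjTranspose_mul_self_add_mul_mul {Q W : Matrix m n 𝕜} {R : Matrix m m 𝕜}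
    {S : Matrix n n 𝕜} (hS : S.IsHermitian) (hRS : Qᴴ * R = S * Qᴴ) :
    (Q + R * W * S)ᴴ * (Q + R * W * S) =
      Qᴴ * Q + S * (Qᴴ * W + Wᴴ * Q + (R * W)ᴴ * (R * W)) * S := by
  have hSR : Rᴴ * Q = Q * S := by
    simpa [conjTranspose_mul, hS.eq] using congrArg conjTranspose hRS
  have hRS' : ∀ X : Matrix m n 𝕜, Qᴴ * (R * X) = S * (Qᴴ * X) := fun X => by
    rw [← Matrix.mul_assoc, hRS, Matrix.mul_assoc]
  simp only [conjTranspose_add, conjTranspose_mul, hS.eq, Matrix.add_mul, Matrix.mul_add,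
    Matrix.mul_assoc, hSR, hRS']
  abel

variable [DecidableEq n]

theorem l2_opNorm_le_one_iff_conjTranspose_mul_self_le_one (A : Matrix m n 𝕜) :
    ‖A‖ ≤ 1 ↔ Aᴴ * A ≤ 1 := by
  have key : ∀ x : n → 𝕜, star x ⬝ᵥ (1 - Aᴴ * A) *ᵥ x =
      ((‖WithLp.toLp 2 x‖ ^ 2 - ‖WithLp.toLp 2 (A *ᵥ x)‖ ^ 2 : ℝ) : 𝕜) := by
    intro x
    rw [sub_mulVec, one_mulVec, dotProduct_sub, ← mulVec_mulVec, dotProduct_mulVec,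
      vecMul_conjTranspose, star_star, RCLike.ofReal_sub, RCLike.ofReal_pow, RCLike.ofReal_pow,
      ← inner_self_eq_norm_sq_to_K, ← inner_self_eq_norm_sq_to_K,
      EuclideanSpace.inner_eq_star_dotProduct, EuclideanSpace.inner_eq_star_dotProduct,
      dotProduct_comm, dotProduct_comm (A *ᵥ x)]
  rw [le_iff, posSemidef_iff_dotProduct_mulVec, l2_opNorm_def,
    ContinuousLinearMap.opNorm_le_iff zero_le_one]
  simp only [key, RCLike.ofReal_nonneg, sub_nonneg, one_mul, isHermitian_one.sub
    (isHermitian_conjTranspose_mul_self A), true_and]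
  refine (WithLp.equiv 2 (n → 𝕜)).forall_congr fun x => ?_
  rw [sq_le_sq₀ (norm_nonneg _) (norm_nonneg _)]
  rfl

theorem l2_opNorm_le_one_iff_mul_conjTranspose_self_le_one [DecidableEq m] (A : Matrix m n 𝕜) :
    ‖A‖ ≤ 1 ↔ A * Aᴴ ≤ 1 := by
  simpa [l2_opNorm_conjTranspose] using l2_opNorm_le_one_iff_conjTranspose_mul_self_le_one Aᴴ

theorem IsHermitian.le_one_of_l2_opNorm_le_one {H : Matrix n n 𝕜} (hH : H.IsHermitian)
    (h : ‖H‖ ≤ 1) : H ≤ 1 := by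
  have hsq := (l2_opNorm_le_one_iff_conjTranspose_mul_self_le_one H).mp h
  rw [← sub_nonneg] at hsq ⊢
  have hsum : 0 ≤ (1 - H)ᴴ * (1 - H) + (1 - Hᴴ * H) :=
    add_nonneg (posSemidef_conjTranspose_mul_self (1 - H)).nonneg hsq
  have htwo : (1 - H)ᴴ * (1 - H) + (1 - Hᴴ * H) = (2 : 𝕜) • (1 - H) := by
    rw [conjTranspose_sub, conjTranspose_one, hH.eq]
    simp only [sub_mul, mul_sub, one_mul, mul_one, two_smul]
    abel
  rw [htwo] at hsum
  have := hsum.posSemidef.smul (show (0 : 𝕜) ≤ 2⁻¹ by positivity)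
  rw [smul_smul, inv_mul_cancel₀ two_ne_zero, one_smul] at this
  exact this.nonneg

theorem l2_opNorm_add_mul_mul_le_one_of_le_one [DecidableEq m] {Q W : Matrix m n 𝕜} (hQ : ‖Q‖ ≤ 1)
    (hH : Qᴴ * W + Wᴴ * Q + ((1 - Q * Qᴴ) * W)ᴴ * ((1 - Q * Qᴴ) * W) ≤ 1) :
    ‖Q + (1 - Q * Qᴴ) * W * (1 - Qᴴ * Q)‖ ≤ 1 := by
  set B := Qᴴ * Q
  set S := 1 - B
  have hRS : Qᴴ * (1 - Q * Qᴴ) = S * Qᴴ := by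
    simp only [S, B, Matrix.mul_sub, Matrix.sub_mul, Matrix.mul_one, Matrix.one_mul,
      Matrix.mul_assoc]
  rw [l2_opNorm_le_one_iff_conjTranspose_mul_self_le_one,
    conjTranspose_mul_self_add_mul_mul (isHermitian_one.sub (isHermitian_conjTranspose_mul_self Q))
      hRS, ← sub_nonneg]
  set H := Qᴴ * W + Wᴴ * Q + ((1 - Q * Qᴴ) * W)ᴴ * ((1 - Q * Qᴴ) * W)
  have hB : 0 ≤ B := (posSemidef_conjTranspose_mul_self Q).nonneg
  have hS : 0 ≤ S := sub_nonneg.mpr ((l2_opNorm_le_one_iff_conjTranspose_mul_self_le_one Q).mp hQ)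
  -- `S - S * S = S * B = S * B * S + B * S * B`, as `S + B = 1`.
  have hsplit : 1 - (B + S * H * S) = S * B * S + B * S * B + S * (1 - H) * S := by
    simp only [S, sub_mul, mul_sub, one_mul, mul_one, mul_assoc]
    abel
  rw [hsplit]
  exact add_nonneg (add_nonneg (conjugate_nonneg_of_nonneg hB hS)
    (conjugate_nonneg_of_nonneg hS hB)) (conjugate_nonneg_of_nonneg (sub_nonneg.mpr hH) hS)

theorem l2_opNorm_add_mul_mul_le_one [DecidableEq m] {Q W : Matrix m n 𝕜} (hQ : ‖Q‖ ≤ 1)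
    (hW : ‖W‖ * (2 + ‖1 - Q * Qᴴ‖ ^ 2) ≤ 1) :
    ‖Q + (1 - Q * Qᴴ) * W * (1 - Qᴴ * Q)‖ ≤ 1 := by
  set R := 1 - Q * Qᴴ
  refine l2_opNorm_add_mul_mul_le_one_of_le_one hQ (IsHermitian.le_one_of_l2_opNorm_le_one ?_ ?_)
  · simp only [IsHermitian, conjTranspose_add, conjTranspose_mul, conjTranspose_conjTranspose]
    abel
  have hW1 : ‖W‖ ≤ 1 := by nlinarith [norm_nonneg W, sq_nonneg ‖R‖]
  have hRW := mul_le_mul_of_nonneg_left hW1 (by positivity : 0 ≤ ‖R‖ ^ 2 * ‖W‖)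
  calc ‖Qᴴ * W + Wᴴ * Q + (R * W)ᴴ * (R * W)‖
      ≤ ‖Qᴴ‖ * ‖W‖ + ‖Wᴴ‖ * ‖Q‖ + ‖R * W‖ * ‖R * W‖ :=
        (norm_add₃_le ..).trans (add_le_add (add_le_add (l2_opNorm_mul _ _)
          (l2_opNorm_mul _ _)) (l2_opNorm_conjTranspose_mul_self _).le)
    _ ≤ ‖W‖ + ‖W‖ + (‖R‖ * ‖W‖) * (‖R‖ * ‖W‖) := by
        rw [l2_opNorm_conjTranspose, l2_opNorm_conjTranspose]
        have hRW' := l2_opNorm_mul R W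
        gcongr <;> nlinarith [norm_nonneg W]
    _ ≤ 1 := by nlinarith

theorem extremePoints_closedBall_subset [DecidableEq m] :
    extremePoints ℝ (closedBall (0 : Matrix m n 𝕜) 1) ⊆ {Q | Q * Qᴴ = 1 ∨ Qᴴ * Q = 1} := by
  intro Q hQ
  have hQ1 : ‖Q‖ ≤ 1 := mem_closedBall_zero_iff.mp hQ.1
  by_contra h
  simp only [mem_ofPred_eq, not_or] at h
  obtain ⟨W, hW⟩ := exists_mul_mul_ne_zero (sub_ne_zero.mpr (Ne.symm h.1))
    (sub_ne_zero.mpr (Ne.symm h.2))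
  set R := 1 - Q * Qᴴ
  set S := 1 - Qᴴ * Q
  set c : ℝ := (‖W‖ * (2 + ‖R‖ ^ 2) + 1)⁻¹
  have hc : 0 < c := by positivity
  have hmem : ∀ ε : 𝕜, ‖ε‖ = c → Q + R * (ε • W) * S ∈ closedBall 0 1 := by
    intro ε hε
    refine mem_closedBall_zero_iff.mpr (l2_opNorm_add_mul_mul_le_one hQ1 ?_)
    rw [norm_smul, hε, mul_comm c, mul_right_comm, ← div_eq_mul_inv, div_le_one (by positivity)]
    linarith
  have hseg := mem_openSegment_add_sub (𝕜 := ℝ) Q (R * ((c : 𝕜) • W) * S)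
  have := hQ.2 (hmem c (by simp [hc.le])) ?_ hseg
  · simp [R, S, hc.ne', hW] at this
  · convert hmem (-c) (by simp [hc.le]) using 1
    simp only [neg_smul, Matrix.mul_neg, Matrix.neg_mul, sub_eq_add_neg]

theorem convexHull_setOf_mul_conjTranspose_eq_one_or_eq_closedBall [DecidableEq m] :
    convexHull ℝ {Q : Matrix m n ℝ | Q * Qᴴ = 1 ∨ Qᴴ * Q = 1} = closedBall 0 1 := by
  set E := {Q : Matrix m n ℝ | Q * Qᴴ = 1 ∨ Qᴴ * Q = 1}
  have hsub : E ⊆ closedBall 0 1 := by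
    rintro Q (h | h) <;> rw [mem_closedBall_zero_iff]
    · rw [l2_opNorm_le_one_iff_mul_conjTranspose_self_le_one, h]
    · rw [l2_opNorm_le_one_iff_conjTranspose_mul_self_le_one, h]
  have hE : IsCompact E :=
    (isCompact_closedBall 0 1).of_isClosed_subset
      ((isClosed_eq (by fun_prop) continuous_const).union
        (isClosed_eq (by fun_prop) continuous_const)) hsub
  refine (convexHull_min hsub (convex_closedBall 0 1)).antisymm ?_
  calc closedBall 0 1
      = closure (convexHull ℝ (extremePoints ℝ (closedBall (0 : Matrix m n ℝ) 1))) :=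
        (closure_convexHull_extremePoints (isCompact_closedBall 0 1) (convex_closedBall 0 1)).symm
    _ ⊆ closure (convexHull ℝ E) := closure_mono (convexHull_mono extremePoints_closedBall_subset)
    _ = convexHull ℝ E := hE.convexHull.isClosed.closure_eq

end Matrix

/-- The convex hull of the set of matrices all of whose singular values equal `1` is the
closed unit ball of the operator norm, `{Q : λ_max(Q) ≤ 1}`. -/
theorem convexHull_allSingularValuesOne (N n : ℕ) :
    convexHull ℝ (allSingularValuesOne N n) =
      {Q : Matrix (Fin N) (Fin n) ℝ | lambdaMax Q ≤ 1} := by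
  have hE : allSingularValuesOne N n = {Q | Q * Qᴴ = 1 ∨ Qᴴ * Q = 1} := by
    simp only [allSingularValuesOne, conjTranspose_eq_transpose_of_trivial]
  have hball : {Q : Matrix (Fin N) (Fin n) ℝ | lambdaMax Q ≤ 1} = closedBall 0 1 := by
    ext Q; rw [mem_closedBall_zero_iff]; rfl
  rw [hE, hball, convexHull_setOf_mul_conjTranspose_eq_one_or_eq_closedBall]
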